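/- Let G : ℝ → ℝ be a continuous, strictly increasing bijection of ℝ onto ℝ, let b̃ : ℝ → ℝ be continuous and one-sided Lipschitz with constant L_b > 0, let σ̃ : ℝ → [0, ∞) be Lipschitz with constant L_σ > 0, let h ∈ (0, 1/L_b), and let A > 0 satisfy L_σ·A < 1. For w ∈ [−A, A] define Φ_w : ℝ → ℝ by letting Φ_w(x) be the unique y ∈ ℝ with G(y) − h·b̃(G(y)) = G(x) + σ̃(G(x))·w (this y exists and is unique). Then: (a) for each fixed w ∈ [−A, A], the map x ↦ Φ_w(x) is strictly increasing; and (b) for each fixed x ∈ ℝ, the map w ↦ Φ_w(x) is nondecreasing on [−A, A]. Consequently the transformed monotone semi-implicit Euler–Maruyama scheme with truncation level A is stochastically increasing. -/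

import Mathlib

/-!
With `g u = u - h·b̃ u`, the defining equation of `Φ_w x` reads `g (G (Φ_w x)) = G x + σ̃(G x)·w`.
The one-sided Lipschitz bound makes `g` grow at rate at least `1 - h·L_b > 0`, so `g ∘ G` is a
strictly increasing bijection and `Φ_w x` is its preimage of the right-hand side. Monotonicity of
`Φ` therefore reduces to that of the right-hand side: in `w` because `σ̃ ≥ 0`, and strictly in `x`
because `|w|·L_σ < 1` keeps the perturbation `σ̃(u)·w` from undoing the growth of `u`.
-/

open Filter

section OneSidedLipschitz

variable {f : ℝ → ℝ} {L h : ℝ}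

lemma sub_le_mul_sub_of_oneSidedLipschitz
    (hf : ∀ x y : ℝ, (x - y) * (f x - f y) ≤ L * (x - y) ^ 2) {u v : ℝ} (hvu : v ≤ u) :
    f u - f v ≤ L * (u - v) := by
  rcases hvu.eq_or_lt with rfl | hlt
  · simp
  · have := hf u v
    nlinarith [sub_pos.mpr hlt]

lemma mul_sub_le_sub_mul_of_oneSidedLipschitz
    (hf : ∀ x y : ℝ, (x - y) * (f x - f y) ≤ L * (x - y) ^ 2) (hh : 0 ≤ h) {u v : ℝ}
    (hvu : v ≤ u) :
    (1 - h * L) * (u - v) ≤ (u - h * f u) - (v - h * f v) := by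
  nlinarith [mul_le_mul_of_nonneg_left (sub_le_mul_sub_of_oneSidedLipschitz hf hvu) hh]

lemma strictMono_sub_mul_of_oneSidedLipschitz
    (hf : ∀ x y : ℝ, (x - y) * (f x - f y) ≤ L * (x - y) ^ 2) (hh : 0 ≤ h) (hhL : h * L < 1) :
    StrictMono fun u => u - h * f u := fun v u hvu => by
  have := mul_sub_le_sub_mul_of_oneSidedLipschitz hf hh hvu.le
  nlinarith [mul_pos (sub_pos.mpr hhL) (sub_pos.mpr hvu)]

lemma surjective_sub_mul_of_oneSidedLipschitz (hcont : Continuous f)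
    (hf : ∀ x y : ℝ, (x - y) * (f x - f y) ≤ L * (x - y) ^ 2) (hh : 0 ≤ h) (hhL : h * L < 1) :
    Function.Surjective fun u => u - h * f u := by
  set g : ℝ → ℝ := fun u => u - h * f u
  have hc : 0 < 1 - h * L := sub_pos.mpr hhL
  have hlin : Tendsto (fun u => g 0 + (1 - h * L) * u) atTop atTop ∧
      Tendsto (fun u => g 0 + (1 - h * L) * u) atBot atBot :=
    ⟨tendsto_atTop_add_const_left _ _ (tendsto_id.const_mul_atTop hc),
      tendsto_atBot_add_const_left _ _ (tendsto_id.const_mul_atBot hc)⟩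
  refine (show Continuous g by fun_prop).surjective ?_ ?_
  · refine tendsto_atTop_mono' atTop ?_ hlin.1
    filter_upwards [eventually_ge_atTop 0] with u hu
    linarith [mul_sub_le_sub_mul_of_oneSidedLipschitz hf hh hu]
  · refine tendsto_atBot_mono' atBot ?_ hlin.2
    filter_upwards [eventually_le_atBot 0] with u hu
    linarith [mul_sub_le_sub_mul_of_oneSidedLipschitz hf hh hu]

lemma bijective_sub_mul_of_oneSidedLipschitz (hcont : Continuous f)
    (hf : ∀ x y : ℝ, (x - y) * (f x - f y) ≤ L * (x - y) ^ 2) (hh : 0 ≤ h) (hhL : h * L < 1) :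
    Function.Bijective fun u => u - h * f u :=
  ⟨(strictMono_sub_mul_of_oneSidedLipschitz hf hh hhL).injective,
    surjective_sub_mul_of_oneSidedLipschitz hcont hf hh hhL⟩

end OneSidedLipschitz

lemma strictMono_add_mul_of_lipschitz {σ : ℝ → ℝ} {L w : ℝ}
    (hσ : ∀ x y : ℝ, |σ x - σ y| ≤ L * |x - y|) (hLw : L * |w| < 1) :
    StrictMono fun u => u + σ u * w := fun u v huv => by
  have hd : 0 < v - u := sub_pos.mpr huv
  have hpert : |(σ v - σ u) * w| ≤ L * (v - u) * |w| := by
    rw [abs_mul, ← abs_of_pos hd]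
    exact mul_le_mul_of_nonneg_right (hσ v u) (abs_nonneg w)
  have hsmall : L * (v - u) * |w| < v - u := by nlinarith
  linarith [neg_abs_le ((σ v - σ u) * w)]

theorem stmt_3_general (G : ℝ → ℝ) (hGmono : StrictMono G)
    (hGbij : Function.Bijective G)
    (btilde : ℝ → ℝ) (hbcont : Continuous btilde) (Lb : ℝ) (hLb : 0 < Lb)
    (hosl : ∀ x y : ℝ, (x - y) * (btilde x - btilde y) ≤ Lb * (x - y) ^ 2)
    (σtilde : ℝ → ℝ) (hσnn : ∀ x, 0 ≤ σtilde x) (Lσ : ℝ) (hLσ : 0 < Lσ)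
    (hσlip : ∀ x y : ℝ, |σtilde x - σtilde y| ≤ Lσ * |x - y|)
    (h : ℝ) (hh : h ∈ Set.Ioo 0 (1 / Lb))
    (A : ℝ) (hLA : Lσ * A < 1) :
    (∀ w ∈ Set.Icc (-A) A, ∀ x : ℝ,
      ∃! y : ℝ, G y - h * btilde (G y) = G x + σtilde (G x) * w) ∧
    (∀ Φ : ℝ → ℝ → ℝ,
      (∀ w ∈ Set.Icc (-A) A, ∀ x : ℝ,
        G (Φ w x) - h * btilde (G (Φ w x)) = G x + σtilde (G x) * w) →
      ((∀ w ∈ Set.Icc (-A) A, StrictMono (fun x : ℝ => Φ w x)) ∧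
        (∀ x : ℝ, ∀ w ∈ Set.Icc (-A) A, ∀ w' ∈ Set.Icc (-A) A,
          w ≤ w' → Φ w x ≤ Φ w' x))) := by
  obtain ⟨hh0, hhLb⟩ := hh
  rw [lt_div_iff₀ hLb] at hhLb
  set F : ℝ → ℝ := fun y => G y - h * btilde (G y)
  have hFmono : StrictMono F :=
    (strictMono_sub_mul_of_oneSidedLipschitz hosl hh0.le hhLb).comp hGmono
  have hFbij : Function.Bijective F :=
    (bijective_sub_mul_of_oneSidedLipschitz hbcont hosl hh0.le hhLb).comp hGbij
  refine ⟨fun w _ x => hFbij.existsUnique _, fun Φ hΦ => ⟨fun w hw x x' hxx' => ?_, ?_⟩⟩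
  · have hLw : Lσ * |w| < 1 := by
      have := hσlip 0 0
      nlinarith [abs_le.mpr hw]
    refine hFmono.lt_iff_lt.mp ?_
    simp only [F, hΦ w hw]
    exact strictMono_add_mul_of_lipschitz hσlip hLw (hGmono hxx')
  · intro x w hw w' hw' hww'
    refine hFmono.le_iff_le.mp ?_
    simp only [F, hΦ w hw, hΦ w' hw']
    gcongr
    exact hσnn _

/-- monotonicity of one step of the transformed monotone semi-implicit
Euler–Maruyama scheme.  With `G` a continuous strictly increasing bijection, `b̃` continuous
and one-sided Lipschitz with constant `L_b`, `σ̃ ≥ 0` Lipschitz with constant `L_σ`,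
`h ∈ (0, 1/L_b)` and `L_σ·A < 1`, the map `Φ_w` defined by
`G (Φ_w x) - h·b̃(G (Φ_w x)) = G x + σ̃(G x)·w` exists, is unique, is strictly increasing in
`x` for fixed `w ∈ [-A, A]`, and is nondecreasing in `w ∈ [-A, A]` for fixed `x`. -/
theorem stmt_3 (G : ℝ → ℝ) (hGcont : Continuous G) (hGmono : StrictMono G)
    (hGbij : Function.Bijective G)
    (btilde : ℝ → ℝ) (hbcont : Continuous btilde) (Lb : ℝ) (hLb : 0 < Lb)
    (hosl : ∀ x y : ℝ, (x - y) * (btilde x - btilde y) ≤ Lb * (x - y) ^ 2)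
    (σtilde : ℝ → ℝ) (hσnn : ∀ x, 0 ≤ σtilde x) (Lσ : ℝ) (hLσ : 0 < Lσ)
    (hσlip : ∀ x y : ℝ, |σtilde x - σtilde y| ≤ Lσ * |x - y|)
    (h : ℝ) (hh : h ∈ Set.Ioo 0 (1 / Lb))
    (A : ℝ) (hA : 0 < A) (hLA : Lσ * A < 1) :
    (∀ w ∈ Set.Icc (-A) A, ∀ x : ℝ,
      ∃! y : ℝ, G y - h * btilde (G y) = G x + σtilde (G x) * w) ∧
    (∀ Φ : ℝ → ℝ → ℝ,
      (∀ w ∈ Set.Icc (-A) A, ∀ x : ℝ,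
        G (Φ w x) - h * btilde (G (Φ w x)) = G x + σtilde (G x) * w) →
      ((∀ w ∈ Set.Icc (-A) A, StrictMono (fun x : ℝ => Φ w x)) ∧
        (∀ x : ℝ, ∀ w ∈ Set.Icc (-A) A, ∀ w' ∈ Set.Icc (-A) A,
          w ≤ w' → Φ w x ≤ Φ w' x))) :=
  stmt_3_general G hGmono hGbij btilde hbcont Lb hLb hosl σtilde hσnn Lσ hLσ hσlip h hh A hLA
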